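/- Let A and B be n-by-n weighted shift matrices (n ≥ 3) with weights a_1, …, a_n and b_1, …, b_n respectively, and suppose that at most two of the weights a_1, …, a_n are zero. Then A is unitarily equivalent to B if and only if a_1⋯a_n = b_1⋯b_n and there exists a fixed k with 1 ≤ k ≤ n such that |a_j| = |b_{k+j}| for all 1 ≤ j ≤ n (indices of the weights taken cyclically modulo n). -/

import Mathlib

open Matrix

/-- The n-by-n weighted shift matrix with weights `a 0, …, a (n-1)`
(representing `a_1, …, a_n`): the `(i, i+1)` entry is `a i` (cyclically). -/
def wsMatrix {n : ℕ} (a : Fin n → ℂ) : Matrix (Fin n) (Fin n) ℂ :=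
  fun i j => if (j : ℕ) = ((i : ℕ) + 1) % n then a i else 0

/-- Two square complex matrices are unitarily equivalent if `B = U* A U`
for some unitary `U`. -/
def UnitarilyEquiv {n : ℕ} (A B : Matrix (Fin n) (Fin n) ℂ) : Prop :=
  ∃ U : Matrix (Fin n) (Fin n) ℂ, U ∈ Matrix.unitaryGroup (Fin n) ℂ ∧ B = Uᴴ * A * U

/-!
If `B = Uᴴ A U` with `U` unitary, then `A U = U B` and `Aᴴ U = U Bᴴ`, which entrywise read
`a i * U (i+1) (j+1) = U i j * b j` and `conj (a i) * U i j = U (i+1) (j+1) * conj (b j)`.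
So a nonzero entry of `U` propagates along its diagonal as long as the weights `a i` it passes
are nonzero, and forces `‖a i‖ = ‖b j‖` on the way. Starting from a nonzero entry in the row
just after a zero `p` of `a`, the moduli of `a` from `p` to the next zero are those of a stretch
of `b` between two of its zeros. With at most one zero this is the whole cycle. With two zeros
the two stretches of `a` get the same shift unless they land on the same stretch of `b` (which,
by a rank count, also has exactly two zeros); then `‖a‖` is periodic, and matching the other
stretch of `b` back into `a` through `Uᴴ` finishes. The products agree since
`det (wsMatrix a) = ± ∏ a`.

Conversely a cyclic relabelling is a permutation similarity, and once the moduli agree the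
phases are absorbed by a diagonal unitary whose entries are partial products of the phase
ratios; the product condition makes these close up around the cycle.
-/

open Fin.CommRing

section UnitarilyEquiv

variable {n : ℕ} {A B C : Matrix (Fin n) (Fin n) ℂ}

theorem UnitarilyEquiv.trans (hAB : UnitarilyEquiv A B) (hBC : UnitarilyEquiv B C) :
    UnitarilyEquiv A C := by
  obtain ⟨U, hU, rfl⟩ := hAB
  obtain ⟨V, hV, rfl⟩ := hBC
  exact ⟨U * V, Submonoid.mul_mem _ hU hV, by simp only [conjTranspose_mul, Matrix.mul_assoc]⟩

theorem UnitarilyEquiv.det_eq (h : UnitarilyEquiv A B) : B.det = A.det := by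
  obtain ⟨U, hU, rfl⟩ := h
  have hUU : Uᴴ.det * U.det = 1 := by
    rw [← det_mul, ← star_eq_conjTranspose, (mem_unitaryGroup_iff').mp hU, det_one]
  rw [det_mul, det_mul, mul_right_comm, hUU, one_mul]

theorem UnitarilyEquiv.rank_eq (h : UnitarilyEquiv A B) : B.rank = A.rank := by
  obtain ⟨U, hU, rfl⟩ := h
  have hU' : Uᴴ ∈ unitaryGroup (Fin n) ℂ := by
    rw [← star_eq_conjTranspose]
    exact Unitary.star_mem hU
  rw [rank_mul_eq_left_of_isUnit_det _ _ (UnitaryGroup.det_isUnit ⟨U, hU⟩),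
    rank_mul_eq_right_of_isUnit_det _ _ (UnitaryGroup.det_isUnit ⟨_, hU'⟩)]

theorem unitarilyEquiv_submatrix (A : Matrix (Fin n) (Fin n) ℂ) (σ : Equiv.Perm (Fin n)) :
    UnitarilyEquiv A (A.submatrix σ σ) := by
  refine ⟨Equiv.Perm.permMatrix ℂ σ.symm, ?_, ?_⟩
  · rw [mem_unitaryGroup_iff, star_eq_conjTranspose, conjTranspose_permMatrix, ← permMatrix_mul,
      inv_mul_cancel, permMatrix_one]
  · rw [conjTranspose_permMatrix, PEquiv.toMatrix_toPEquiv_mul, PEquiv.mul_toMatrix_toPEquiv]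
    rfl

theorem unitarilyEquiv_diagonal_conj (A : Matrix (Fin n) (Fin n) ℂ) (d : Fin n → Circle) :
    UnitarilyEquiv A (Matrix.of fun i j => ((d i)⁻¹ : Circle) * A i j * d j) := by
  refine ⟨diagonal fun i => d i, ?_, ?_⟩
  · rw [mem_unitaryGroup_iff, star_eq_conjTranspose, diagonal_conjTranspose, diagonal_mul_diagonal]
    simp [Complex.mul_conj]
  · ext i j
    simp [diagonal_mul, mul_diagonal, ← Circle.coe_inv_eq_conj]

end UnitarilyEquiv

section Intertwines

variable {m R : Type*} [Fintype m] [Semiring R] [StarRing R]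

def Intertwines (A B U : Matrix m m R) : Prop :=
  A * U = U * B ∧ Aᴴ * U = U * Bᴴ

theorem Intertwines.conjTranspose {A B U : Matrix m m R} (h : Intertwines A B U) :
    Intertwines B A Uᴴ := by
  constructor
  · simpa only [conjTranspose_mul, conjTranspose_conjTranspose] using
      (congrArg Matrix.conjTranspose h.2).symm
  · simpa only [conjTranspose_mul] using (congrArg Matrix.conjTranspose h.1).symm

end Intertwines

theorem intertwines_of_mem_unitaryGroup {m R : Type*} [Fintype m] [DecidableEq m] [CommRing R]
    [StarRing R] {A B U : Matrix m m R} (hU : U ∈ unitaryGroup m R) (hB : B = Uᴴ * A * U) :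
    Intertwines A B U := by
  have hUU : U * Uᴴ = 1 := by
    rw [← star_eq_conjTranspose]
    exact mem_unitaryGroup_iff.mp hU
  subst hB
  constructor
  · rw [← Matrix.mul_assoc, ← Matrix.mul_assoc, hUU, Matrix.one_mul]
  · rw [conjTranspose_mul, conjTranspose_mul, conjTranspose_conjTranspose, ← Matrix.mul_assoc,
      ← Matrix.mul_assoc, hUU, Matrix.one_mul]

theorem Matrix.exists_ne_zero_of_isUnit_det {m R : Type*} [Fintype m] [DecidableEq m]
    [CommRing R] [Nontrivial R] {U : Matrix m m R} (hU : IsUnit U.det) (i : m) :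
    ∃ j, U i j ≠ 0 := by
  by_contra! h
  exact not_isUnit_zero (det_eq_zero_of_row_eq_zero i h ▸ hU)

theorem Finset.eq_or_eq_of_card_filter_le_two {α : Type*} [Fintype α] {P : α → Prop}
    [DecidablePred P] (h : (Finset.univ.filter P).card ≤ 2) {x y : α} (hx : P x) (hy : P y)
    (hxy : x ≠ y) (z : α) (hz : P z) : z = x ∨ z = y := by
  by_contra! hne
  have : 2 < (Finset.univ.filter P).card :=
    Finset.two_lt_card.mpr ⟨x, by simpa, y, by simpa, z, by simpa, hxy, hne.1.symm, hne.2.symm⟩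
  omega

section FinArith

variable {n : ℕ} [NeZero n]

theorem Fin.add_natCast_ne_self (p : Fin n) {t : ℕ} (ht₀ : 0 < t) (htn : t < n) :
    p + (t : Fin n) ≠ p := by
  rw [Ne, add_eq_left, Fin.natCast_eq_zero]
  exact fun hdvd => (Nat.le_of_dvd ht₀ hdvd).not_gt htn

theorem Fin.add_natCast_ne_of_lt_val_sub {p q : Fin n} {t : ℕ} (ht : t < (q - p).val) :
    p + (t : Fin n) ≠ q := by
  intro h
  have hval := congrArg Fin.val (eq_sub_of_add_eq' h)
  rw [Fin.val_natCast, Nat.mod_eq_of_lt (ht.trans (q - p).isLt)] at hval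
  omega

theorem Fin.apply_add_natCast_ne_zero {M : Type*} [Zero M] {c : Fin n → M} {x y : Fin n}
    (hc : ∀ i, c i = 0 → i = x ∨ i = y) (t : ℕ) (ht₀ : 0 < t) (ht : t < (y - x).val) :
    c (x + t) ≠ 0 := fun h0 =>
  (hc _ h0).elim (Fin.add_natCast_ne_self x ht₀ (ht.trans (y - x).isLt))
    (Fin.add_natCast_ne_of_lt_val_sub ht)

theorem Fin.exists_eq_add_natCast {p q : Fin n} (hpq : p ≠ q) (j : Fin n) :
    (∃ t ≤ (q - p).val, j = p + t) ∨ ∃ t ≤ (p - q).val, j = q + t := by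
  rcases le_or_gt (j - p).val (q - p).val with hle | hlt
  · exact Or.inl ⟨_, hle, by simp⟩
  · refine Or.inr ⟨_, ?_, (by simp : j = q + ((j - q).val : Fin n))⟩
    have hx : j - q = (j - p) - (q - p) := by ring
    have hy : p - q = 0 - (q - p) := by ring
    have hpos : 0 < q - p := Fin.pos_iff_ne_zero.mpr (sub_ne_zero.mpr hpq.symm)
    rw [hx, hy, Fin.coe_sub_iff_le.mpr hlt.le, Fin.coe_sub_iff_lt.mpr hpos, Fin.val_zero]
    have := (j - p).isLt
    omega

theorem Fin.exists_ofNat_eq (κ : Fin n) : ∃ k, 1 ≤ k ∧ k ≤ n ∧ Fin.ofNat n k = κ := by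
  rcases eq_or_ne κ 0 with rfl | hκ
  · exact ⟨n, Nat.one_le_iff_ne_zero.mpr (NeZero.ne n), le_rfl, by ext; simp⟩
  · exact ⟨κ.val, Nat.one_le_iff_ne_zero.mpr (Fin.val_ne_zero_iff.mpr hκ), κ.isLt.le,
      by ext; simp⟩

theorem Fin.exists_mul_eq_of_prod_eq_one {G : Type*} [CommMonoid G] (φ : Fin n → G)
    (hφ : ∏ m, φ m = 1) : ∃ d : Fin n → G, ∀ m, d (m + 1) = d m * φ m := by
  obtain ⟨k, rfl⟩ := Nat.exists_eq_add_one_of_ne_zero (NeZero.ne n)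
  refine ⟨fun i => ∏ t ∈ Finset.range i, φ t, fun m => ?_⟩
  dsimp only
  rw [Fin.val_add_one]
  split_ifs with hm
  · rw [hm, Finset.prod_range_zero, Fin.val_last, ← Fin.natCast_eq_last,
      ← Finset.prod_range_succ, ← Fin.prod_univ_eq_prod_range (fun t => φ t), ← hφ]
    simp
  · rw [Finset.prod_range_succ, Fin.cast_val_eq_self]

end FinArith

theorem Complex.exists_circle_mul_eq {z w : ℂ} (h : ‖z‖ = ‖w‖) : ∃ u : Circle, u * z = w := by
  rcases eq_or_ne z 0 with rfl | hz
  · exact ⟨1, by rw [mul_zero, eq_comm, ← norm_eq_zero, ← h, norm_zero]⟩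
  · refine ⟨⟨w / z, mem_sphere_zero_iff_norm.2 ?_⟩, ?_⟩
    · rw [norm_div, ← h, div_self (norm_ne_zero_iff.mpr hz)]
    · exact div_mul_cancel₀ w hz

theorem exists_circle_mul_eq_of_prod_eq {ι : Type*} [Fintype ι] [DecidableEq ι] {a b : ι → ℂ}
    (habs : ∀ m, ‖a m‖ = ‖b m‖) (hprod : ∏ m, a m = ∏ m, b m) :
    ∃ φ : ι → Circle, ∏ m, φ m = 1 ∧ ∀ m, φ m * a m = b m := by
  choose ψ hψ using fun m => Complex.exists_circle_mul_eq (habs m)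
  by_cases ha : ∀ m, a m ≠ 0
  · refine ⟨ψ, Circle.coe_injective ((map_prod Circle.coeHom ψ _).trans ?_), hψ⟩
    apply mul_right_cancel₀ (Finset.prod_ne_zero_iff.mpr fun m _ => ha m)
    rw [← Finset.prod_mul_distrib]
    exact (Finset.prod_congr rfl fun m _ => hψ m).trans (by simp [hprod])
  · -- a vanishing weight leaves one phase free, and it is used to correct the product
    push Not at ha
    obtain ⟨m₀, hm₀⟩ := ha
    refine ⟨ψ * Pi.mulSingle m₀ (∏ m, ψ m)⁻¹, by simp [Finset.prod_mul_distrib], fun m => ?_⟩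
    rcases eq_or_ne m m₀ with rfl | hm
    · rw [hm₀, mul_zero, eq_comm, ← norm_eq_zero, ← habs, hm₀, norm_zero]
    · simp [hm, hψ]

section WeightedShift

variable {n : ℕ} [NeZero n]

theorem wsMatrix_apply (a : Fin n → ℂ) (i j : Fin n) :
    wsMatrix a i j = if j = i + 1 then a i else 0 := by
  simp only [wsMatrix, Fin.ext_iff, Fin.val_add, Fin.val_one', Nat.add_mod_mod]

theorem wsMatrix_eq_diagonal_mul_permMatrix (a : Fin n → ℂ) :
    wsMatrix a = diagonal a * (Equiv.addRight (1 : Fin n)).permMatrix ℂ := by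
  ext i j
  simp [wsMatrix_apply, diagonal_mul, PEquiv.toMatrix_apply, eq_comm]

theorem wsMatrix_submatrix_addRight (a : Fin n → ℂ) (κ : Fin n) :
    (wsMatrix a).submatrix (· + κ) (· + κ) = wsMatrix fun j => a (j + κ) := by
  ext i j
  simp only [submatrix_apply, wsMatrix_apply, add_right_comm i κ 1, add_left_inj]

theorem wsMatrix_mul_apply (a : Fin n → ℂ) (M : Matrix (Fin n) (Fin n) ℂ) (i j : Fin n) :
    (wsMatrix a * M) i j = a i * M (i + 1) j := by
  simp [mul_apply, wsMatrix_apply, ite_mul]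

theorem mul_wsMatrix_apply (a : Fin n → ℂ) (M : Matrix (Fin n) (Fin n) ℂ) (i j : Fin n) :
    (M * wsMatrix a) i j = M i (j - 1) * a (j - 1) := by
  simp [mul_apply, wsMatrix_apply, ← sub_eq_iff_eq_add]

theorem conjTranspose_wsMatrix_mul_apply (a : Fin n → ℂ) (M : Matrix (Fin n) (Fin n) ℂ)
    (i j : Fin n) : ((wsMatrix a)ᴴ * M) i j = star (a (i - 1)) * M (i - 1) j := by
  simp [mul_apply, wsMatrix_apply, apply_ite (starRingEnd ℂ), ← sub_eq_iff_eq_add]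

theorem mul_conjTranspose_wsMatrix_apply (a : Fin n → ℂ) (M : Matrix (Fin n) (Fin n) ℂ)
    (i j : Fin n) : (M * (wsMatrix a)ᴴ) i j = M i (j + 1) * star (a j) := by
  simp [mul_apply, wsMatrix_apply, apply_ite (starRingEnd ℂ)]

theorem det_wsMatrix (a : Fin n → ℂ) :
    (wsMatrix a).det = (∏ j, a j) * Equiv.Perm.sign (Equiv.addRight (1 : Fin n)) := by
  rw [wsMatrix_eq_diagonal_mul_permMatrix, det_mul, det_diagonal, det_permutation]

theorem rank_wsMatrix (a : Fin n → ℂ) : (wsMatrix a).rank = Fintype.card {j // a j ≠ 0} := by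
  rw [wsMatrix_eq_diagonal_mul_permMatrix, rank_mul_eq_left_of_isUnit_det _ _ ?_, rank_diagonal]
  rw [det_permutation]
  exact (Units.isUnit _).map (Int.castRingHom ℂ)

theorem unitarilyEquiv_wsMatrix_circle_mul (a : Fin n → ℂ) {φ : Fin n → Circle}
    (hφ : ∏ m, φ m = 1) : UnitarilyEquiv (wsMatrix a) (wsMatrix fun m => φ m * a m) := by
  obtain ⟨d, hd⟩ := Fin.exists_mul_eq_of_prod_eq_one φ hφ
  convert unitarilyEquiv_diagonal_conj (wsMatrix a) d using 1
  ext i j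
  simp only [wsMatrix_apply, of_apply]
  split_ifs with hij
  · simp only [hij, hd, Circle.coe_mul, Circle.coe_inv]
    field_simp [Circle.coe_ne_zero]
  · simp

theorem unitarilyEquiv_wsMatrix_of_norm_eq_add {a b : Fin n → ℂ} (κ : Fin n)
    (hprod : ∏ j, a j = ∏ j, b j) (habs : ∀ j, ‖a j‖ = ‖b (j + κ)‖) :
    UnitarilyEquiv (wsMatrix a) (wsMatrix b) := by
  obtain ⟨φ, hφ, hφa⟩ := exists_circle_mul_eq_of_prod_eq habs
    (hprod.trans (Equiv.prod_comp (Equiv.addRight κ) b).symm)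
  have hshift := unitarilyEquiv_submatrix (wsMatrix fun j => b (j + κ)) (Equiv.addRight (-κ))
  rw [Equiv.coe_addRight, wsMatrix_submatrix_addRight] at hshift
  simp only [neg_add_cancel_right] at hshift
  refine (unitarilyEquiv_wsMatrix_circle_mul a hφ).trans ?_
  simpa only [hφa] using hshift

end WeightedShift

section Forward

variable {n : ℕ} [NeZero n] {a b : Fin n → ℂ} {U : Matrix (Fin n) (Fin n) ℂ}

theorem UnitarilyEquiv.prod_eq (h : UnitarilyEquiv (wsMatrix a) (wsMatrix b)) :
    ∏ j, a j = ∏ j, b j := by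
  have := h.det_eq
  rw [det_wsMatrix, det_wsMatrix] at this
  exact (mul_right_cancel₀ (by simp) this).symm

theorem UnitarilyEquiv.card_filter_eq_zero_eq (h : UnitarilyEquiv (wsMatrix a) (wsMatrix b)) :
    (Finset.univ.filter fun j => b j = 0).card = (Finset.univ.filter fun j => a j = 0).card := by
  have hrank := h.rank_eq
  rw [rank_wsMatrix, rank_wsMatrix, Fintype.card_subtype, Fintype.card_subtype] at hrank
  simp only [ne_eq] at hrank
  have hb := Finset.card_filter_add_card_filter_not (s := Finset.univ) (fun j => b j = 0)
  have ha := Finset.card_filter_add_card_filter_not (s := Finset.univ) (fun j => a j = 0)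
  omega

theorem exists_forall_norm_eq_add_of_arcs {p q z : Fin n} (hpq : p ≠ q)
    (h₁ : ∀ t ≤ (q - p).val, ‖a (p + t)‖ = ‖b (z + t)‖)
    (h₂ : ∀ t ≤ (p - q).val, ‖a (q + t)‖ = ‖b (z + (q - p) + t)‖) :
    ∃ κ, ∀ j, ‖a j‖ = ‖b (j + κ)‖ := by
  refine ⟨z - p, fun j => ?_⟩
  rcases Fin.exists_eq_add_natCast hpq j with ⟨t, ht, rfl⟩ | ⟨t, ht, rfl⟩
  · rw [h₁ t ht]
    congr 2
    ring
  · rw [h₂ t ht]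
    congr 2
    ring

namespace Intertwines

variable (h : Intertwines (wsMatrix a) (wsMatrix b) U)
include h

theorem mul_apply_add_one (i j : Fin n) : a i * U (i + 1) (j + 1) = U i j * b j := by
  simpa [wsMatrix_mul_apply, mul_wsMatrix_apply] using congrFun (congrFun h.1 i) (j + 1)

theorem star_mul_apply (i j : Fin n) : star (a i) * U i j = U (i + 1) (j + 1) * star (b j) := by
  simpa [conjTranspose_wsMatrix_mul_apply, mul_conjTranspose_wsMatrix_apply] using
    congrFun (congrFun h.2 (i + 1)) j

theorem apply_add_one_ne_zero {i j : Fin n} (hU : U i j ≠ 0) (ha : a i ≠ 0) :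
    U (i + 1) (j + 1) ≠ 0 := by
  intro h0
  have := h.star_mul_apply i j
  rw [h0, zero_mul] at this
  exact mul_ne_zero (star_ne_zero.mpr ha) hU this

theorem norm_eq_of_apply_ne_zero {i j : Fin n} (hU : U i j ≠ 0 ∨ U (i + 1) (j + 1) ≠ 0) :
    ‖a i‖ = ‖b j‖ := by
  have e₁ := congrArg norm (h.mul_apply_add_one i j)
  have e₂ := congrArg norm (h.star_mul_apply i j)
  simp only [norm_mul, norm_star] at e₁ e₂
  have hpos : 0 < ‖U i j‖ + ‖U (i + 1) (j + 1)‖ := by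
    rcases hU with hU | hU
    · exact add_pos_of_pos_of_nonneg (norm_pos_iff.mpr hU) (norm_nonneg _)
    · exact add_pos_of_nonneg_of_pos (norm_nonneg _) (norm_pos_iff.mpr hU)
  have : (‖a i‖ - ‖b j‖) * (‖U i j‖ + ‖U (i + 1) (j + 1)‖) = 0 := by
    linear_combination e₁ + e₂
  exact sub_eq_zero.mp ((mul_eq_zero.mp this).resolve_right hpos.ne')

variable (hU : IsUnit U.det)
include hU

theorem exists_forall_le_norm_eq {p : Fin n} {d : ℕ}
    (hmid : ∀ t : ℕ, 0 < t → t < d → a (p + t) ≠ 0) :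
    ∃ z, ∀ t ≤ d, ‖a (p + t)‖ = ‖b (z + t)‖ := by
  obtain ⟨j, hj⟩ := exists_ne_zero_of_isUnit_det hU (p + 1)
  have hdiag : ∀ t, 1 ≤ t → t ≤ d → U (p + t) (j - 1 + t) ≠ 0 := by
    intro t ht
    induction t, ht using Nat.le_induction with
    | base => intro _; simpa using hj
    | succ t ht ih =>
      intro htd
      have := h.apply_add_one_ne_zero (ih (by omega)) (hmid t (by omega) (by omega))
      simpa only [Nat.cast_succ, add_assoc] using this
  refine ⟨j - 1, fun t ht => ?_⟩
  rcases Nat.eq_zero_or_pos t with rfl | ht₀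
  · exact h.norm_eq_of_apply_ne_zero (Or.inr (by simpa using hj))
  · exact h.norm_eq_of_apply_ne_zero (Or.inl (hdiag t ht₀ ht))

theorem exists_forall_norm_eq_add_of_forall_eq {p : Fin n} (ha : ∀ i, a i = 0 → i = p) :
    ∃ κ, ∀ j, ‖a j‖ = ‖b (j + κ)‖ := by
  obtain ⟨z, hz⟩ := h.exists_forall_le_norm_eq hU (d := n)
    fun t ht₀ htn h0 => Fin.add_natCast_ne_self p ht₀ htn (ha _ h0)
  refine ⟨z - p, fun j => ?_⟩
  have := hz (j - p).val (j - p).isLt.le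
  simp only [Fin.cast_val_eq_self, add_sub_cancel] at this
  rw [this]
  congr 2
  ring

theorem exists_forall_norm_eq_add_of_two_zeros {p q : Fin n} (hpq : p ≠ q) (hp : a p = 0)
    (hq : a q = 0) (ha : ∀ i, a i = 0 → i = p ∨ i = q)
    (hb : (Finset.univ.filter fun j => b j = 0).card ≤ 2) :
    ∃ κ, ∀ j, ‖a j‖ = ‖b (j + κ)‖ := by
  have hU' : IsUnit Uᴴ.det := by
    rw [det_conjTranspose]
    exact hU.star
  obtain ⟨z, hz⟩ := h.exists_forall_le_norm_eq hU (Fin.apply_add_natCast_ne_zero ha)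
  set w := z + (q - p) with hw
  have hbz : b z = 0 := by simpa [hp] using (hz 0 (Nat.zero_le _)).symm
  have hbw : b w = 0 := by simpa [hq] using (hz _ le_rfl).symm
  have hzw : z ≠ w := by simpa [hw, sub_eq_zero] using hpq.symm
  have hb' := Finset.eq_or_eq_of_card_filter_le_two hb hbz hbw hzw
  refine exists_forall_norm_eq_add_of_arcs hpq hz ?_
  obtain ⟨z₂, hz₂⟩ := h.exists_forall_le_norm_eq hU
    (Fin.apply_add_natCast_ne_zero fun i hi => (ha i hi).symm)
  rcases hb' z₂ (by simpa [hq] using (hz₂ 0 (Nat.zero_le _)).symm) with hz₂z | hz₂w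
  · -- both stretches of `a` are matched with the stretch of `b` starting at `z`,
    -- so `‖a‖` has period `q - p`
    rw [hz₂z] at hz₂
    have hsym : p - q = q - p := by
      have hb₂ : b (z + (p - q)) = 0 := by simpa [hp] using (hz₂ _ le_rfl).symm
      rcases hb' _ hb₂ with h₀ | h₀
      · exact absurd (sub_eq_zero.mp (add_eq_left.mp h₀)) hpq
      · exact add_left_cancel h₀
    obtain ⟨y, hy⟩ := h.conjTranspose.exists_forall_le_norm_eq hU' (p := w) (d := (p - q).val)
      (by simpa only [show z - w = p - q by rw [hw]; ring] using
        Fin.apply_add_natCast_ne_zero fun i hi => (hb' i hi).symm)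
    rcases ha y (by simpa [hbw] using (hy 0 (Nat.zero_le _)).symm) with rfl | rfl
    · exact fun t ht => (hz₂ t ht).trans ((hz t (hsym ▸ ht)).symm.trans (hy t ht).symm)
    · exact fun t ht => (hy t ht).symm
  · rwa [hz₂w] at hz₂

theorem exists_forall_norm_eq_add (ha : (Finset.univ.filter fun j => a j = 0).card ≤ 2)
    (hb : (Finset.univ.filter fun j => b j = 0).card ≤ 2) :
    ∃ κ, ∀ j, ‖a j‖ = ‖b (j + κ)‖ := by
  by_cases hsub : ∃ p, ∀ i, a i = 0 → i = p
  · obtain ⟨p, hp⟩ := hsub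
    exact h.exists_forall_norm_eq_add_of_forall_eq hU hp
  · push Not at hsub
    obtain ⟨p, hp, -⟩ := hsub 0
    obtain ⟨q, hq, hqp⟩ := hsub p
    exact h.exists_forall_norm_eq_add_of_two_zeros hU hqp.symm hp hq
      (Finset.eq_or_eq_of_card_filter_le_two ha hp hq hqp.symm) hb

end Intertwines

end Forward

theorem stmt5_general (n : ℕ) [NeZero n] (a b : Fin n → ℂ)
    (hz : (Finset.univ.filter fun j => a j = 0).card ≤ 2) :
    UnitarilyEquiv (wsMatrix a) (wsMatrix b) ↔
      (∏ j, a j = ∏ j, b j ∧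
        ∃ k : ℕ, 1 ≤ k ∧ k ≤ n ∧
          ∀ j : Fin n, ‖a j‖ = ‖b (j + Fin.ofNat n k)‖) := by
  constructor
  · intro h
    have ⟨U, hU, hB⟩ := h
    obtain ⟨κ, hκ⟩ := (intertwines_of_mem_unitaryGroup hU hB).exists_forall_norm_eq_add
      (UnitaryGroup.det_isUnit ⟨U, hU⟩) hz (h.card_filter_eq_zero_eq ▸ hz)
    obtain ⟨k, hk₁, hkn, rfl⟩ := Fin.exists_ofNat_eq κ
    exact ⟨h.prod_eq, k, hk₁, hkn, hκ⟩
  · rintro ⟨hprod, k, -, -, habs⟩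
    exact unitarilyEquiv_wsMatrix_of_norm_eq_add _ hprod habs

theorem stmt5 (n : ℕ) [NeZero n] (hn : 3 ≤ n) (a b : Fin n → ℂ)
    (hz : (Finset.univ.filter fun j => a j = 0).card ≤ 2) :
    UnitarilyEquiv (wsMatrix a) (wsMatrix b) ↔
      (∏ j, a j = ∏ j, b j ∧
        ∃ k : ℕ, 1 ≤ k ∧ k ≤ n ∧
          ∀ j : Fin n, ‖a j‖ = ‖b (j + Fin.ofNat n k)‖) :=
  stmt5_general n a b hz
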